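/- Let x be a clustered graph signal of the form x[i] = Σ_l a_l·1_{C_l}[i] for the partition F, with noisy samples y[i] = x[i] + e[i] on a sampling set M ⊆ V, and let x̂ be any minimizer of the network Lasso objective Σ_{i∈M} |x̃[i] − y[i]| + λ·‖x̃‖_TV with λ > 0. Then, writing x̃ := x̂ − x, the inequality Σ_{i∈M} |x̃[i]| + λ·‖x̃‖_{E∖∂F} ≤ λ·‖x̃‖_{∂F} + 2·Σ_{i∈M} |e[i]| holds. -/

import Mathlib

/-!
Test the minimality of `x̂` against the true signal `x`. Since `x` is constant on every cluster,
its total variation lives on the boundary `∂F`, and on intra-cluster edges `‖x̂‖` equals `‖x̂ − x‖`.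
On `∂F` the triangle inequality gives `‖x‖_{∂F} ≤ ‖x̂‖_{∂F} + ‖x̂ − x‖_{∂F}`, and on the samples
`|x̂ − x| ≤ |x̂ − y| + |e|` while `|x − y| = |e|`. Adding these to the minimality inequality yields
the claim.
-/

open Finset

variable {V ι : Type*}

/-- Sum of `W i j * |x i − x j|` over a symmetric set `S` of directed edges,
counting each undirected edge `{i,j}` exactly once (hence the division by 2). -/
noncomputable def edgeNorm (W : V → V → ℝ) (S : Finset (V × V)) (x : V → ℝ) : ℝ :=
  (∑ p ∈ S, W p.1 p.2 * |x p.1 - x p.2|) / 2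

/-- The neighbourhood `N(i)` of a node `i`. -/
def nbhd [Fintype V] [DecidableEq V] (E : Finset (V × V)) (i : V) : Finset V :=
  Finset.univ.filter fun j => (i, j) ∈ E

/-- The demand induced by the flow `h` at node `i`:
`d[i] = Σ_{j ∈ N(i)} (h(j,i) − h(i,j))`. -/
noncomputable def demand [Fintype V] [DecidableEq V] (E : Finset (V × V))
    (h : V → V → ℝ) (i : V) : ℝ :=
  ∑ j ∈ nbhd E i, (h j i - h i j)

/-- The boundary `∂F` of the partition with cluster assignment `cl`:
edges whose endpoints lie in different clusters. -/
def bdry [DecidableEq V] [DecidableEq ι] (E : Finset (V × V)) (cl : V → ι) :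
    Finset (V × V) :=
  E.filter fun p => cl p.1 ≠ cl p.2

/-- The nodes `B(F)` incident to at least one boundary edge. -/
def bdryNodes [Fintype V] [DecidableEq V] [DecidableEq ι] (E : Finset (V × V))
    (cl : V → ι) : Finset V :=
  Finset.univ.filter fun i => ∃ j, (i, j) ∈ bdry E cl

/-- The sampling set `M` resolves the partition `cl` with constants `K, L`:
for every choice of bits `b` on the boundary edges (one bit per undirected
boundary edge, encoded by `b (j,i) = !b (i,j)`), there is a flow `h` obeying
the capacity constraints on intra-cluster edges, carrying flow `L·W[i,j]` in
the direction selected by the bit on every boundary edge, and whose demands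
satisfy `|d[i]| ≤ K` on `M` and `d[i] = 0` off `M`. -/
def Resolves [Fintype V] [DecidableEq V] [DecidableEq ι] (E : Finset (V × V))
    (W : V → V → ℝ) (cl : V → ι) (M : Finset V) (K L : ℝ) : Prop :=
  ∀ b : V × V → Bool, (∀ p ∈ bdry E cl, b (p.2, p.1) = !b p) →
    ∃ h : V → V → ℝ,
      (∀ p ∈ E \ bdry E cl, |h p.1 p.2| ≤ W p.1 p.2) ∧
      (∀ p ∈ bdry E cl, h p.1 p.2 = (if b p then (1 : ℝ) else 0) * (L * W p.1 p.2)) ∧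
      (∀ i ∈ M, |demand E h i| ≤ K) ∧
      (∀ i, i ∉ M → demand E h i = 0)

section edgeNorm

variable (W : V → V → ℝ)

theorem edgeNorm_sdiff_add [DecidableEq V] {S T : Finset (V × V)} (hTS : T ⊆ S) (f : V → ℝ) :
    edgeNorm W (S \ T) f + edgeNorm W T f = edgeNorm W S f := by
  simp only [edgeNorm, ← add_div, sum_sdiff hTS]

theorem edgeNorm_le_add_edgeNorm_sub {S : Finset (V × V)} (hW : ∀ p ∈ S, 0 ≤ W p.1 p.2)
    (f g : V → ℝ) :
    edgeNorm W S g ≤ edgeNorm W S f + edgeNorm W S (fun i => f i - g i) := by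
  rw [edgeNorm, edgeNorm, edgeNorm, ← add_div, ← sum_add_distrib]
  gcongr with p hp
  rw [← mul_add]
  refine mul_le_mul_of_nonneg_left ?_ (hW p hp)
  calc |g p.1 - g p.2| = |(f p.1 - f p.2) - ((f p.1 - g p.1) - (f p.2 - g p.2))| := by ring_nf
    _ ≤ _ := abs_sub _ _

variable {S : Finset (V × V)} {g : V → ℝ}

theorem edgeNorm_sub_eq_of_forall_eq (hg : ∀ p ∈ S, g p.1 = g p.2) (f : V → ℝ) :
    edgeNorm W S (fun i => f i - g i) = edgeNorm W S f := by
  unfold edgeNorm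
  congr 1
  refine sum_congr rfl fun p hp => ?_
  dsimp only
  rw [hg p hp, sub_sub_sub_cancel_right]

theorem edgeNorm_eq_zero_of_forall_eq (hg : ∀ p ∈ S, g p.1 = g p.2) : edgeNorm W S g = 0 := by
  rw [edgeNorm, sum_eq_zero fun p hp => by rw [hg p hp, sub_self, abs_zero, mul_zero], zero_div]

end edgeNorm

theorem cl_eq_of_mem_sdiff_bdry [DecidableEq V] [DecidableEq ι] {E : Finset (V × V)}
    {cl : V → ι} {p : V × V} (hp : p ∈ E \ bdry E cl) : cl p.1 = cl p.2 := by
  by_contra hne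
  exact (mem_sdiff.1 hp).2 (mem_filter.2 ⟨(mem_sdiff.1 hp).1, hne⟩)

theorem sum_abs_sub_le_sum_abs_sub_add {M : Finset V} {e x y : V → ℝ}
    (hy : ∀ i ∈ M, y i = x i + e i) (z : V → ℝ) :
    ∑ i ∈ M, |z i - x i| ≤ ∑ i ∈ M, |z i - y i| + ∑ i ∈ M, |e i| := by
  rw [← sum_add_distrib]
  refine sum_le_sum fun i hi => ?_
  calc |z i - x i| = |(z i - y i) + e i| := by rw [hy i hi, sub_add_eq_sub_sub, sub_add_cancel]
    _ ≤ _ := abs_add_le _ _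

theorem minimizer_error_inequality_general
    [DecidableEq V] [DecidableEq ι]
    (E : Finset (V × V)) (W : V → V → ℝ)
    (hWpos : ∀ p ∈ E, 0 < W p.1 p.2)
    (cl : V → ι) (a : ι → ℝ) (x : V → ℝ) (hx : ∀ i, x i = a (cl i))
    (M : Finset V) (e y : V → ℝ) (hy : ∀ i ∈ M, y i = x i + e i)
    (lam : ℝ) (hlam : 0 < lam)
    (xhat : V → ℝ)
    (hmin : ∀ z : V → ℝ,
      (∑ i ∈ M, |xhat i - y i|) + lam * edgeNorm W E xhat ≤
        (∑ i ∈ M, |z i - y i|) + lam * edgeNorm W E z) :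
    (∑ i ∈ M, |xhat i - x i|) +
        lam * edgeNorm W (E \ bdry E cl) (fun i => xhat i - x i) ≤
      lam * edgeNorm W (bdry E cl) (fun i => xhat i - x i) +
        2 * ∑ i ∈ M, |e i| := by
  have hBE : bdry E cl ⊆ E := filter_subset _ _
  have hx_const : ∀ p ∈ E \ bdry E cl, x p.1 = x p.2 := fun p hp => by
    rw [hx, hx, cl_eq_of_mem_sdiff_bdry hp]
  have hfid_x : ∑ i ∈ M, |x i - y i| = ∑ i ∈ M, |e i| :=
    sum_congr rfl fun i hi => by rw [hy i hi, sub_add_cancel_left, abs_neg]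
  have hfid_xhat := sum_abs_sub_le_sum_abs_sub_add hy xhat
  have htri := edgeNorm_le_add_edgeNorm_sub W (fun p hp => (hWpos p (hBE hp)).le) xhat x
  have hopt := hmin x
  rw [← edgeNorm_sdiff_add W hBE, ← edgeNorm_sdiff_add W hBE x,
    edgeNorm_eq_zero_of_forall_eq W hx_const, ← edgeNorm_sub_eq_of_forall_eq W hx_const xhat,
    hfid_x] at hopt
  linarith [mul_le_mul_of_nonneg_left htri hlam.le]

/-- For a clustered signal `x` and any nLasso minimizer `x̂`,
writing `x̃ = x̂ − x`, one has
`Σ_{i∈M}|x̃[i]| + λ‖x̃‖_{E∖∂F} ≤ λ‖x̃‖_{∂F} + 2·Σ_{i∈M}|e[i]|`. -/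
theorem minimizer_error_inequality
    [Fintype V] [DecidableEq V] [DecidableEq ι]
    (E : Finset (V × V)) (W : V → V → ℝ)
    (hEsymm : ∀ i j : V, (i, j) ∈ E → (j, i) ∈ E)
    (hEirr : ∀ i : V, (i, i) ∉ E)
    (hWsymm : ∀ i j : V, W i j = W j i)
    (hWpos : ∀ p ∈ E, 0 < W p.1 p.2)
    (hWzero : ∀ i j : V, (i, j) ∉ E → W i j = 0)
    (cl : V → ι) (a : ι → ℝ) (x : V → ℝ) (hx : ∀ i, x i = a (cl i))
    (M : Finset V) (e y : V → ℝ) (hy : ∀ i ∈ M, y i = x i + e i)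
    (lam : ℝ) (hlam : 0 < lam)
    (xhat : V → ℝ)
    (hmin : ∀ z : V → ℝ,
      (∑ i ∈ M, |xhat i - y i|) + lam * edgeNorm W E xhat ≤
        (∑ i ∈ M, |z i - y i|) + lam * edgeNorm W E z) :
    (∑ i ∈ M, |xhat i - x i|) +
        lam * edgeNorm W (E \ bdry E cl) (fun i => xhat i - x i) ≤
      lam * edgeNorm W (bdry E cl) (fun i => xhat i - x i) +
        2 * ∑ i ∈ M, |e i| :=
  minimizer_error_inequality_general E W hWpos cl a x hx M e y hy lam hlam xhat hmin
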